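/- arXiv:2404.16111 — 2 statements merged into one kernel-verified Lean document; each statement's English description precedes it below -/
import Mathlib

section
/- In a model of first-order logic with a binary relation λ on a nonempty set A, if every element has a unique λ-successor and a unique λ-predecessor, and any two elements are connected by a finite λ-path (λ* is total), then A is finite. -/
open Function

/- The successor map `f` is a function whose forward orbit of any point is all of `A`. Reaching
`x` from `f x` makes `x` periodic, so its orbit, which is everything, has at most period-many
points. -/

theorem Relation.ReflTransGen.exists_iterate_eq {α : Type*} {r : α → α → Prop} {f : α → α}
    (hf : ∀ a b, r a b → b = f a) {x y : α} (h : Relation.ReflTransGen r x y) :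
    ∃ n, f^[n] x = y := by
  induction h with
  | refl => exact ⟨0, rfl⟩
  | tail _ hbc ih =>
    obtain ⟨n, rfl⟩ := ih
    exact ⟨n + 1, by rw [iterate_succ_apply', hf _ _ hbc]⟩

theorem Function.IsPeriodicPt.finite_of_forall_exists_iterate_eq {α : Type*} {f : α → α}
    {x : α} {n : ℕ} (hn : 0 < n) (hx : IsPeriodicPt f n x) (h : ∀ y, ∃ m, f^[m] x = y) :
    Finite α :=
  Finite.of_surjective (fun k : Fin n => f^[k] x) fun y =>
    let ⟨m, hm⟩ := h y
    ⟨⟨m % n, Nat.mod_lt m hn⟩, (hx.iterate_mod_apply m).trans hm⟩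

theorem finite_of_unique_succ_pred_connected_general {A : Type} [Nonempty A] (r : A → A → Prop)
    (hsucc : ∀ z : A, ∃! y, r z y)
    (hconn : ∀ x y : A, Relation.ReflTransGen r x y) :
    Finite A := by
  choose f _ hf using hsucc
  have reach (x y : A) : ∃ n, f^[n] x = y := (hconn x y).exists_iterate_eq hf
  obtain ⟨x⟩ := ‹Nonempty A›
  obtain ⟨n, hn⟩ := reach (f x) x
  have hx : IsPeriodicPt f (n + 1) x := by
    rw [IsPeriodicPt, IsFixedPt, iterate_succ_apply, hn]
  exact hx.finite_of_forall_exists_iterate_eq n.succ_pos (reach x)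

theorem finite_of_unique_succ_pred_connected {A : Type} [Nonempty A] (r : A → A → Prop)
    (hpred : ∀ z : A, ∃! x, r x z) (hsucc : ∀ z : A, ∃! y, r z y)
    (hconn : ∀ x y : A, Relation.ReflTransGen r x y) :
    Finite A :=
  finite_of_unique_succ_pred_connected_general r hsucc hconn
end

section
/- If A is a set with a binary relation λ such that every element has a unique λ-successor and a unique λ-predecessor, and for all x, y ∈ A either (x,y) or (y,x) lies in the reflexive–transitive closure λ*, then A is countable. -/
theorem countable_of_unique_succ_pred_linear {A : Type} (r : A → A → Prop)
    (hpred : ∀ z : A, ∃! x, r x z) (hsucc : ∀ z : A, ∃! y, r z y)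
    (hconn : ∀ x y : A, Relation.ReflTransGen r x y ∨ Relation.ReflTransGen r y x) :
    Countable A := by
  rcases isEmpty_or_nonempty A with h | ⟨⟨a⟩⟩
  · exact Countable.of_equiv _ (Equiv.equivEmpty A).symm
  · set f : A → A := fun z => (hsucc z).choose with hf
    set g : A → A := fun z => (hpred z).choose with hg
    have hfr : ∀ z, r z (f z) := fun z => (hsucc z).choose_spec.1
    have hgr : ∀ z, r (g z) z := fun z => (hpred z).choose_spec.1
    have fwd : ∀ y, Relation.ReflTransGen r a y → ∃ n, f^[n] a = y := by
      intro y h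
      induction h with
      | refl => exact ⟨0, rfl⟩
      | tail _ hbc ih =>
        obtain ⟨n, hn⟩ := ih
        rename_i b c _
        refine ⟨n + 1, ?_⟩
        have : c = f b := (hsucc b).choose_spec.2 c hbc ▸ rfl
        rw [Function.iterate_succ_apply', hn, ← this]
    have bwd : ∀ y, Relation.ReflTransGen r y a → ∃ n, g^[n] a = y := by
      intro y h
      have : ∀ b c, Relation.ReflTransGen r c b → ∃ n, g^[n] b = c := by
        intro b c h
        induction h with
        | refl => exact ⟨0, rfl⟩
        | tail _ hbc ih =>
          obtain ⟨n, hn⟩ := ih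
          rename_i p q _
          refine ⟨n + 1, ?_⟩
          have : p = g q := (hpred q).choose_spec.2 p hbc ▸ rfl
          rw [Function.iterate_succ_apply, ← this, hn]
      exact this a y h
    have hsurj : Function.Surjective (fun x : ℕ ⊕ ℕ => Sum.elim (fun n => f^[n] a) (fun n => g^[n] a) x) := by
      intro y
      rcases hconn a y with h | h
      · obtain ⟨n, hn⟩ := fwd y h
        exact ⟨Sum.inl n, hn⟩
      · obtain ⟨n, hn⟩ := bwd y h
        exact ⟨Sum.inr n, hn⟩
    exact hsurj.countable
end
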